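/- arXiv:2108.13104 — 6 statements merged into one kernel-verified Lean document; each statement's English description precedes it below -/
import Mathlib

section
/- If a star expression e permits immediate termination (e↓), then there exists a star expression f such that: f does not permit immediate termination (¬f↓), e is provably equal to 1 + f in the equational system Mil⁻, f has the same star height as e, and f has exactly the same set of action derivatives as e (i.e., for every action a and expression e', f —a→ e' iff e —a→ e'). -/
namespace RegEx

/-- Star expressions over an action alphabet `A`. -/
inductive StExp (A : Type) : Type
  | zero : StExp A
  | one : StExp A
  | act : A → StExp A
  | add : StExp A → StExp A → StExp A
  | mul : StExp A → StExp A → StExp A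
  | star : StExp A → StExp A
  deriving DecidableEq

instance {A : Type} : Zero (StExp A) := ⟨StExp.zero⟩
instance {A : Type} : One (StExp A) := ⟨StExp.one⟩
instance {A : Type} : Add (StExp A) := ⟨StExp.add⟩
instance {A : Type} : Mul (StExp A) := ⟨StExp.mul⟩

/-- Immediate termination `e↓`. -/
inductive Term {A : Type} : StExp A → Prop
  | one : Term 1
  | addL {e f : StExp A} : Term e → Term (e + f)
  | addR {e f : StExp A} : Term f → Term (e + f)
  | mul {e f : StExp A} : Term e → Term f → Term (e * f)
  | star (e : StExp A) : Term e.star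

/-- The SOS transition relation `e —a→ e'`. -/
inductive Step {A : Type} : StExp A → A → StExp A → Prop
  | act (a : A) : Step (StExp.act a) a 1
  | addL {e1 e2 : StExp A} {a : A} {e' : StExp A} : Step e1 a e' → Step (e1 + e2) a e'
  | addR {e1 e2 : StExp A} {a : A} {e' : StExp A} : Step e2 a e' → Step (e1 + e2) a e'
  | mulL {e1 e2 : StExp A} {a : A} {e1' : StExp A} :
      Step e1 a e1' → Step (e1 * e2) a (e1' * e2)
  | mulR {e1 e2 : StExp A} {a : A} {e2' : StExp A} :
      Term e1 → Step e2 a e2' → Step (e1 * e2) a e2'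
  | star {e : StExp A} {a : A} {e' : StExp A} :
      Step e a e' → Step e.star a (e' * e.star)

/-- Boolean immediate-termination test. -/
def termB {A : Type} : StExp A → Bool
  | .zero => false
  | .one => true
  | .act _ => false
  | .add e f => termB e || termB f
  | .mul e f => termB e && termB f
  | .star _ => true

/-- Star height. -/
def sh {A : Type} : StExp A → ℕ
  | .zero => 0
  | .one => 0
  | .act _ => 0
  | .add e f => max (sh e) (sh f)
  | .mul e f => max (sh e) (sh f)
  | .star e => sh e + 1

/-- The axioms of Milner's purely equational system `Mil⁻`. -/
inductive MilAx {A : Type} : StExp A → StExp A → Prop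
  | assocAdd (e f g : StExp A) : MilAx ((e + f) + g) (e + (f + g))
  | addZero (e : StExp A) : MilAx (e + 0) e
  | commAdd (e f : StExp A) : MilAx (e + f) (f + e)
  | idemAdd (e : StExp A) : MilAx (e + e) e
  | assocMul (e f g : StExp A) : MilAx ((e * f) * g) (e * (f * g))
  | rdistr (e f g : StExp A) : MilAx ((e + f) * g) (e * g + f * g)
  | oneMul (e : StExp A) : MilAx (1 * e) e
  | mulOne (e : StExp A) : MilAx (e * 1) e
  | zeroMul (e : StExp A) : MilAx (0 * e) 0
  | recStar (e : StExp A) : MilAx e.star (1 + e * e.star)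
  | trmBody (e : StExp A) : MilAx e.star (1 + e).star

/-- The ACI axioms for `+`. -/
inductive ACIAx {A : Type} : StExp A → StExp A → Prop
  | assoc (e f g : StExp A) : ACIAx ((e + f) + g) (e + (f + g))
  | comm (e f : StExp A) : ACIAx (e + f) (f + e)
  | idem (e : StExp A) : ACIAx (e + e) e

/-- Equational-logic derivability from a set of axioms `ax`. -/
inductive EqDeriv {A : Type} (ax : StExp A → StExp A → Prop) : StExp A → StExp A → Prop
  | ax {e f : StExp A} : ax e f → EqDeriv ax e f
  | refl (e : StExp A) : EqDeriv ax e e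
  | symm {e f : StExp A} : EqDeriv ax e f → EqDeriv ax f e
  | trans {e f g : StExp A} : EqDeriv ax e f → EqDeriv ax f g → EqDeriv ax e g
  | addCongr {e1 f1 e2 f2 : StExp A} :
      EqDeriv ax e1 f1 → EqDeriv ax e2 f2 → EqDeriv ax (e1 + e2) (f1 + f2)
  | mulCongr {e1 f1 e2 f2 : StExp A} :
      EqDeriv ax e1 f1 → EqDeriv ax e2 f2 → EqDeriv ax (e1 * e2) (f1 * f2)
  | starCongr {e f : StExp A} : EqDeriv ax e f → EqDeriv ax e.star f.star

/-- Derivability in `Mil⁻`. -/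
def MilMinus {A : Type} : StExp A → StExp A → Prop := EqDeriv MilAx

/-- Milner's system `Mil = Mil⁻ + RSP*`. -/
inductive Mil {A : Type} : StExp A → StExp A → Prop
  | ax {e f : StExp A} : MilAx e f → Mil e f
  | refl (e : StExp A) : Mil e e
  | symm {e f : StExp A} : Mil e f → Mil f e
  | trans {e f g : StExp A} : Mil e f → Mil f g → Mil e g
  | addCongr {e1 f1 e2 f2 : StExp A} : Mil e1 f1 → Mil e2 f2 → Mil (e1 + e2) (f1 + f2)
  | mulCongr {e1 f1 e2 f2 : StExp A} : Mil e1 f1 → Mil e2 f2 → Mil (e1 * e2) (f1 * f2)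
  | starCongr {e f : StExp A} : Mil e f → Mil e.star f.star
  | rsp {e f g : StExp A} : Mil e (f * e + g) → ¬ Term f → Mil e (f.star * g)

/-- The variant system `Mil' = Mil⁻ + USP*`. -/
inductive Mil' {A : Type} : StExp A → StExp A → Prop
  | ax {e f : StExp A} : MilAx e f → Mil' e f
  | refl (e : StExp A) : Mil' e e
  | symm {e f : StExp A} : Mil' e f → Mil' f e
  | trans {e f g : StExp A} : Mil' e f → Mil' f g → Mil' e g
  | addCongr {e1 f1 e2 f2 : StExp A} : Mil' e1 f1 → Mil' e2 f2 → Mil' (e1 + e2) (f1 + f2)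
  | mulCongr {e1 f1 e2 f2 : StExp A} : Mil' e1 f1 → Mil' e2 f2 → Mil' (e1 * e2) (f1 * f2)
  | starCongr {e f : StExp A} : Mil' e f → Mil' e.star f.star
  | usp {e1 e2 f g : StExp A} :
      Mil' e1 (f * e1 + g) → Mil' e2 (f * e2 + g) → ¬ Term f → Mil' e1 e2

/-- Sum of a list of star expressions (empty sum is `0`). -/
def listSum {A : Type} : List (StExp A) → StExp A
  | [] => 0
  | e :: l => listSum l + e

/-- Star expression denoted by a transition label in `A ∪ {1}`. -/
def lab {A : Type} : Option A → StExp A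
  | none => 1
  | some a => StExp.act a

/-- Antimirov's partial derivatives. -/
def pderiv {A : Type} [DecidableEq A] (a : A) : StExp A → Finset (StExp A)
  | .zero => ∅
  | .one => ∅
  | .act b => if b = a then {1} else ∅
  | .add e1 e2 => pderiv a e1 ∪ pderiv a e2
  | .mul e1 e2 =>
      if termB e1 then (pderiv a e1).image (· * e2) ∪ pderiv a e2
      else (pderiv a e1).image (· * e2)
  | .star e => (pderiv a e).image (· * e.star)

/-- The set of action derivatives `A∂(e)`. -/
def AD {A : Type} (e : StExp A) : Set (A × StExp A) := {p | Step e p.1 p.2}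

/-- A bisimulation w.r.t. the SOS semantics of star expressions. -/
def IsBisim {A : Type} (B : StExp A → StExp A → Prop) : Prop :=
  ∀ u v, B u v →
    (∀ (a : A) u', Step u a u' → ∃ v', Step v a v' ∧ B u' v') ∧
    (∀ (a : A) v', Step v a v' → ∃ u', Step u a u' ∧ B u' v') ∧
    (Term u ↔ Term v)

/-- Bisimilarity of the process interpretations of two star expressions. -/
def Bisim {A : Type} (e f : StExp A) : Prop := ∃ B, IsBisim B ∧ B e f

/-! ### 1-charts with entry/body-labelled transitions -/

/-- Data of a (level-labelled) 1-chart: transitions carry an action label in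
`A ∪ {1}` (`none` = the empty-step label `1`) and a marking level in `ℕ`
(`0` = body transition, positive = loop-entry transition). -/
structure ChartData (A V : Type) where
  start : V
  tr : V → Option A → ℕ → V → Prop
  term : V → Bool

namespace ChartData

variable {A V : Type}

def anyStep (C : ChartData A V) (x y : V) : Prop := ∃ l n, C.tr x l n y

def bodyStep (C : ChartData A V) (x y : V) : Prop := ∃ l, C.tr x l 0 y

def oneTr (C : ChartData A V) (x y : V) : Prop := ∃ n, C.tr x none n y

/-- Termination constant of the chart at a vertex. -/
def tau (C : ChartData A V) (v : V) : StExp A := if C.term v then 1 else 0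

/-- Weakly guarded: no cycle of 1-transitions. -/
def WeaklyGuarded (C : ChartData A V) : Prop :=
  ∀ v, ¬ Relation.TransGen C.oneTr v v

/-- The entry/body labelling is guarded: loop-entry transitions carry proper labels. -/
def GuardedW (C : ChartData A V) : Prop :=
  ∀ v n w, 0 < n → ¬ C.tr v none n w

/-- (w1): no cycle of body transitions. -/
def W1 (C : ChartData A V) : Prop :=
  ∀ v, ¬ Relation.TransGen C.bodyStep v v

def AvoidStep (C : ChartData A V) (v x y : V) : Prop := C.anyStep x y ∧ y ≠ v

/-- (w2a): from the target of a loop-entry transition of level `n` at `v`, as long as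
`v` is not yet revisited, all transitions taken have level `< n`. -/
def W2a (C : ChartData A V) : Prop :=
  ∀ v n l w, 0 < n → C.tr v l n w → w ≠ v →
    ∀ x, Relation.ReflTransGen (C.AvoidStep v) w x →
      ∀ l' m y, C.tr x l' m y → y ≠ v → m < n

/-- (w2b): every infinite path from the target of a loop-entry transition at `v`
returns to `v`. -/
def W2b (C : ChartData A V) : Prop :=
  ∀ v n l w, 0 < n → C.tr v l n w →
    ∀ p : ℕ → V, p 0 = w → (∀ i, C.anyStep (p i) (p (i + 1))) → ∃ i, p i = v

/-- The entry/body labelling is a layered LEE-witness. -/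
def IsLLEE (C : ChartData A V) : Prop := C.W1 ∧ C.W2a ∧ C.W2b

/-- Body path avoiding the vertex `v`. -/
def BodyAvoid (C : ChartData A V) (v : V) (x y : V) : Prop :=
  Relation.ReflTransGen (fun x y => C.bodyStep x y ∧ y ≠ v) x y

/-- `C.InLoop v w`: `w` is in the body of the loop at `v` (`v ↘ w`, i.e. `w ↘⁻ v`). -/
def InLoop (C : ChartData A V) (v w : V) : Prop :=
  ∃ n l v', 0 < n ∧ C.tr v l n v' ∧ v' ≠ v ∧ C.BodyAvoid v v' w

end ChartData

/-- An LLEE-witnessed coinductive proof over the system `Mil⁻`-style equational logic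
with axioms `ax`, of the equation `e1 = e2`. -/
structure LCoProof (A : Type) (ax : StExp A → StExp A → Prop) (e1 e2 : StExp A) where
  V : Type
  fin : Finite V
  C : ChartData A V
  reach : ∀ v, Relation.ReflTransGen C.anyStep C.start v
  wg : C.WeaklyGuarded
  llee : C.IsLLEE
  L1 : V → StExp A
  L2 : V → StExp A
  trs : V → List (Option A × V)
  trs_spec : ∀ v p, p ∈ trs v ↔ ∃ n, C.tr v p.1 n p.2
  trs_nodup : ∀ v, (trs v).Nodup
  sol1 : ∀ v, EqDeriv ax (L1 v)
    (C.tau v + listSum ((trs v).map fun p => lab p.1 * L1 p.2))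
  sol2 : ∀ v, EqDeriv ax (L2 v)
    (C.tau v + listSum ((trs v).map fun p => lab p.1 * L2 p.2))
  start1 : L1 C.start = e1
  start2 : L2 C.start = e2

/-- The coinductive variant `cMil` of Milner's system: equational logic with the
axioms of `Mil⁻` and the rule scheme `LCP_n`. -/
inductive CMil {A : Type} : StExp A → StExp A → Prop
  | ax {e f : StExp A} : MilAx e f → CMil e f
  | refl (e : StExp A) : CMil e e
  | symm {e f : StExp A} : CMil e f → CMil f e
  | trans {e f g : StExp A} : CMil e f → CMil f g → CMil e g
  | addCongr {e1 f1 e2 f2 : StExp A} : CMil e1 f1 → CMil e2 f2 → CMil (e1 + e2) (f1 + f2)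
  | mulCongr {e1 f1 e2 f2 : StExp A} : CMil e1 f1 → CMil e2 f2 → CMil (e1 * e2) (f1 * f2)
  | starCongr {e f : StExp A} : CMil e f → CMil e.star f.star
  | lcp {e f : StExp A} (Γ : List (StExp A × StExp A)) :
      (∀ p ∈ Γ, CMil p.1 p.2) →
      Nonempty (LCoProof A (fun x y => MilAx x y ∨ (x, y) ∈ Γ) e f) →
      CMil e f

/-! ### Stacked star expressions and the 1-chart interpretation -/

/-- Star expressions extended with the stacked product `⋆` (constructor `smul`). -/
inductive SExp (A : Type) : Type
  | zero : SExp A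
  | one : SExp A
  | act : A → SExp A
  | add : SExp A → SExp A → SExp A
  | mul : SExp A → SExp A → SExp A
  | star : SExp A → SExp A
  | smul : SExp A → SExp A → SExp A
  deriving DecidableEq

/-- Embedding of star expressions into stacked star expressions. -/
def emb {A : Type} : StExp A → SExp A
  | .zero => .zero
  | .one => .one
  | .act a => .act a
  | .add e f => .add (emb e) (emb f)
  | .mul e f => .mul (emb e) (emb f)
  | .star e => .star (emb e)

/-- The projection `π` replacing stacked products by ordinary products. -/
def proj {A : Type} : SExp A → StExp A
  | .zero => 0
  | .one => 1
  | .act a => StExp.act a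
  | .add e f => proj e + proj f
  | .mul e f => proj e * proj f
  | .star e => (proj e).star
  | .smul e f => proj e * proj f

/-- Immediate termination for stacked star expressions (no termination at `⋆`). -/
inductive STerm {A : Type} : SExp A → Prop
  | one : STerm SExp.one
  | addL {e f : SExp A} : STerm e → STerm (SExp.add e f)
  | addR {e f : SExp A} : STerm f → STerm (SExp.add e f)
  | mul {e f : SExp A} : STerm e → STerm f → STerm (SExp.mul e f)
  | star (e : SExp A) : STerm (SExp.star e)

/-- Boolean immediate-termination test for stacked star expressions. -/
def sTermB {A : Type} : SExp A → Bool
  | .zero => false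
  | .one => true
  | .act _ => false
  | .add e f => sTermB e || sTermB f
  | .mul e f => sTermB e && sTermB f
  | .star _ => true
  | .smul _ _ => false

/-- Termination constant of a stacked star expression. -/
def sTau {A : Type} (E : SExp A) : StExp A := if sTermB E then 1 else 0

/-- The TSS of the 1-chart interpretation: transitions between stacked star
expressions, labelled by `A ∪ {1}` (`none` is the empty-step label `1`). -/
inductive SStep {A : Type} : SExp A → Option A → SExp A → Prop
  | act (a : A) : SStep (SExp.act a) (some a) SExp.one
  | addL {e1 e2 : SExp A} {a : A} {E' : SExp A} :
      SStep e1 (some a) E' → SStep (SExp.add e1 e2) (some a) E'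
  | addR {e1 e2 : SExp A} {a : A} {E' : SExp A} :
      SStep e2 (some a) E' → SStep (SExp.add e1 e2) (some a) E'
  | mulL {E1 e2 : SExp A} {l : Option A} {E1' : SExp A} :
      SStep E1 l E1' → SStep (SExp.mul E1 e2) l (SExp.mul E1' e2)
  | mulR {e1 e2 : SExp A} {a : A} {E2' : SExp A} :
      STerm e1 → SStep e2 (some a) E2' → SStep (SExp.mul e1 e2) (some a) E2'
  | star {e : SExp A} {a : A} {E' : SExp A} :
      SStep e (some a) E' → SStep (SExp.star e) (some a) (SExp.smul E' (SExp.star e))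
  | smulL {E1 f : SExp A} {l : Option A} {E1' : SExp A} :
      SStep E1 l E1' → SStep (SExp.smul E1 f) l (SExp.smul E1' f)
  | smulT {E1 f : SExp A} : STerm E1 → SStep (SExp.smul E1 f) none f

/-- One transition step (any label) between stacked star expressions. -/
def sR {A : Type} (X Y : SExp A) : Prop := ∃ l, SStep X l Y

end RegEx

namespace RegEx

section Aux
variable {A : Type}

lemma mm_ax {e f : StExp A} (h : MilAx e f) : MilMinus e f := EqDeriv.ax h
lemma mm_refl (e : StExp A) : MilMinus e e := EqDeriv.refl e
lemma mm_symm {e f : StExp A} (h : MilMinus e f) : MilMinus f e := EqDeriv.symm h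
lemma mm_trans {e f g : StExp A} (h1 : MilMinus e f) (h2 : MilMinus f g) :
    MilMinus e g := EqDeriv.trans h1 h2
lemma mm_add {e1 f1 e2 f2 : StExp A} (h1 : MilMinus e1 f1) (h2 : MilMinus e2 f2) :
    MilMinus (e1 + e2) (f1 + f2) := EqDeriv.addCongr h1 h2
lemma mm_mul {e1 f1 e2 f2 : StExp A} (h1 : MilMinus e1 f1) (h2 : MilMinus e2 f2) :
    MilMinus (e1 * e2) (f1 * f2) := EqDeriv.mulCongr h1 h2
lemma mm_star {e f : StExp A} (h : MilMinus e f) : MilMinus e.star f.star :=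
  EqDeriv.starCongr h

lemma step_add_iff {e1 e2 : StExp A} {a : A} {e' : StExp A} :
    Step (e1 + e2) a e' ↔ Step e1 a e' ∨ Step e2 a e' := by
  constructor
  · intro h
    cases h with
    | addL h => exact Or.inl h
    | addR h => exact Or.inr h
  · rintro (h | h)
    exacts [Step.addL h, Step.addR h]

lemma not_term_add {e1 e2 : StExp A} (h1 : ¬ Term e1) (h2 : ¬ Term e2) :
    ¬ Term (e1 + e2) := by
  intro h; cases h with
  | addL h => exact h1 h
  | addR h => exact h2 h

lemma not_term_mulL {e1 e2 : StExp A} (h1 : ¬ Term e1) : ¬ Term (e1 * e2) := by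
  intro h; cases h with
  | mul ha hb => exact h1 ha

end Aux

end RegEx
open RegEx in
/-- every terminating star expression is `Mil⁻`-provably of the form
`1 + f` with `f` non-terminating, of the same star height and with the same
action derivatives. -/
theorem stmt_1 {A : Type} (e : StExp A) (he : Term e) :
    ∃ f : StExp A, ¬ Term f ∧ MilMinus e (1 + f) ∧ sh f = sh e ∧
      ∀ (a : A) (e' : StExp A), Step f a e' ↔ Step e a e' := by
  induction e with
  | zero => exact absurd he (by intro h; cases h)
  | act a => exact absurd he (by intro h; cases h)
  | one =>
    refine ⟨0, ?_, ?_, rfl, ?_⟩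
    · intro h; cases h
    · exact mm_symm (mm_ax (MilAx.addZero 1))
    · intro a e'
      constructor <;> (intro h; cases h)
  | add e1 e2 ih1 ih2 =>
    by_cases h1 : Term e1 <;> by_cases h2 : Term e2
    · obtain ⟨f1, hf1, heq1, hsh1, hs1⟩ := ih1 h1
      obtain ⟨f2, hf2, heq2, hsh2, hs2⟩ := ih2 h2
      refine ⟨f1 + f2, not_term_add hf1 hf2, ?_, ?_, ?_⟩
      · -- e1+e2 = (1+f1)+(1+f2) = 1+(f1+(1+f2)) = 1+((1+f2)+f1) = 1+(1+(f2+f1)) ...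
        -- simpler: (1+f1)+(1+f2) = ((1+f1)+1)+f2 = (1+(f1+1))+f2 ...
        refine mm_trans (mm_add heq1 heq2) ?_
        -- (1+f1)+(1+f2) = 1+(f1+(1+f2))
        refine mm_trans (mm_symm (mm_ax (MilAx.assocAdd (1+f1) 1 f2))) ?_
        refine mm_trans (mm_add (mm_ax (MilAx.assocAdd 1 f1 1)) (mm_refl f2)) ?_
        refine mm_trans (mm_add (mm_add (mm_refl 1) (mm_ax (MilAx.commAdd f1 1))) (mm_refl f2)) ?_
        refine mm_trans (mm_add (mm_symm (mm_ax (MilAx.assocAdd 1 1 f1))) (mm_refl f2)) ?_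
        refine mm_trans (mm_add (mm_add (mm_ax (MilAx.idemAdd 1)) (mm_refl f1)) (mm_refl f2)) ?_
        exact mm_ax (MilAx.assocAdd 1 f1 f2)
      · simp [sh, hsh1, hsh2]
      · intro a e'
        rw [step_add_iff]
        constructor
        · rintro (h | h)
          exacts [Step.addL ((hs1 _ _).mp h), Step.addR ((hs2 _ _).mp h)]
        · intro h
          cases h with
          | addL h => exact Or.inl ((hs1 _ _).mpr h)
          | addR h => exact Or.inr ((hs2 _ _).mpr h)
    · obtain ⟨f1, hf1, heq1, hsh1, hs1⟩ := ih1 h1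
      refine ⟨f1 + e2, not_term_add hf1 h2, ?_, ?_, ?_⟩
      · refine mm_trans (mm_add heq1 (mm_refl e2)) ?_
        exact mm_ax (MilAx.assocAdd 1 f1 e2)
      · simp [sh, hsh1]
      · intro a e'
        rw [step_add_iff]
        constructor
        · rintro (h | h)
          exacts [Step.addL ((hs1 _ _).mp h), Step.addR h]
        · intro h
          cases h with
          | addL h => exact Or.inl ((hs1 _ _).mpr h)
          | addR h => exact Or.inr h
    · obtain ⟨f2, hf2, heq2, hsh2, hs2⟩ := ih2 h2
      refine ⟨e1 + f2, not_term_add h1 hf2, ?_, ?_, ?_⟩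
      · refine mm_trans (mm_add (mm_refl e1) heq2) ?_
        -- e1+(1+f2) = (e1+1)+f2 = (1+e1)+f2 = 1+(e1+f2)
        refine mm_trans (mm_symm (mm_ax (MilAx.assocAdd e1 1 f2))) ?_
        refine mm_trans (mm_add (mm_ax (MilAx.commAdd e1 1)) (mm_refl f2)) ?_
        exact mm_ax (MilAx.assocAdd 1 e1 f2)
      · simp [sh, hsh2]
      · intro a e'
        rw [step_add_iff]
        constructor
        · rintro (h | h)
          exacts [Step.addL h, Step.addR ((hs2 _ _).mp h)]
        · intro h
          cases h with
          | addL h => exact Or.inl h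
          | addR h => exact Or.inr ((hs2 _ _).mpr h)
    · exact absurd he (not_term_add h1 h2)
  | mul e1 e2 ih1 ih2 =>
    have h12 : Term e1 ∧ Term e2 := by cases he with | mul a b => exact ⟨a, b⟩
    obtain ⟨f1, hf1, heq1, hsh1, hs1⟩ := ih1 h12.1
    obtain ⟨f2, hf2, heq2, hsh2, hs2⟩ := ih2 h12.2
    refine ⟨f2 + f1 * e2, not_term_add hf2 (not_term_mulL hf1), ?_, ?_, ?_⟩
    · -- e1*e2 = (1+f1)*e2 = 1*e2 + f1*e2 = e2 + f1*e2 = (1+f2)+f1*e2 = 1+(f2+f1*e2)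
      refine mm_trans (mm_mul heq1 (mm_refl e2)) ?_
      refine mm_trans (mm_ax (MilAx.rdistr 1 f1 e2)) ?_
      refine mm_trans (mm_add (mm_ax (MilAx.oneMul e2)) (mm_refl (f1 * e2))) ?_
      refine mm_trans (mm_add heq2 (mm_refl (f1 * e2))) ?_
      exact mm_ax (MilAx.assocAdd 1 f2 (f1 * e2))
    · simp only [sh, hsh1, hsh2]
      omega
    · intro a e'
      constructor
      · intro h
        cases h with
        | addL h => exact Step.mulR h12.1 ((hs2 a e').mp h)
        | addR h =>
          cases h with
          | mulL h => exact Step.mulL ((hs1 _ _).mp h)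
          | mulR ht h => exact absurd ht hf1
      · intro h
        cases h with
        | mulL h => exact Step.addR (Step.mulL ((hs1 _ _).mpr h))
        | mulR ht h => exact Step.addL ((hs2 _ _).mpr h)
  | star g ih =>
    -- choose h with ¬Term h, same steps as g, same sh, and g* = 1 + h * g*
    obtain ⟨h, hth, hsteps, hsh, heq⟩ :
        ∃ h : StExp A, ¬ Term h ∧ (∀ a e', Step h a e' ↔ Step g a e') ∧
          sh h = sh g ∧ MilMinus g.star (1 + h * g.star) := by
      by_cases hg : Term g
      · obtain ⟨fg, hfg, heqg, hshg, hsg⟩ := ih hg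
        refine ⟨fg, hfg, hsg, hshg, ?_⟩
        -- g* = (1+fg)* = fg* = 1 + fg*fg* = 1 + fg*g*
        have hstar : MilMinus g.star fg.star :=
          mm_trans (mm_star heqg) (mm_symm (mm_ax (MilAx.trmBody fg)))
        refine mm_trans hstar ?_
        refine mm_trans (mm_ax (MilAx.recStar fg)) ?_
        exact mm_add (mm_refl 1) (mm_mul (mm_refl fg) (mm_symm hstar))
      · exact ⟨g, hg, fun _ _ => Iff.rfl, rfl, mm_ax (MilAx.recStar g)⟩
    refine ⟨h * g.star, not_term_mulL hth, heq, ?_, ?_⟩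
    · simp only [sh, hsh]
      omega
    · intro a e'
      constructor
      · intro hs
        cases hs with
        | mulL hs => exact Step.star ((hsteps _ _).mp hs)
        | mulR ht hs => exact absurd ht hth
      · intro hs
        cases hs with
        | star hs => exact Step.mulL ((hsteps _ _).mpr hs)
end

section
/- In the equational system Mil⁻, every star expression e is provably equal to the sum of its termination constant and the sum over all its action derivatives: e = τ(e) + Σ_{(a,e') with e —a→ e'} a · e', where τ(e) = 1 if e↓ and τ(e) = 0 otherwise, and the sum is taken over any enumeration of the (finite) set of action derivatives of e (the result is independent of the enumeration up to provability since Mil⁻ contains associativity, commutativity and idempotency of +). -/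
namespace RegEx

/-!
Induction on `e`, computing an explicit list `derivs e` of its action derivatives. Each SOS rule
is matched by an axiom of `Mil⁻`: right distributivity for products, and for `e*` the equation
`e* = (1 + e)*` removes the termination constant of the body before `e* = 1 + e·e*` unfolds it.
Any other enumeration of the derivatives has the same set of summands, so by associativity,
commutativity and idempotency of `+` it gives a provably equal sum.
-/

variable {A : Type}

local infix:50 " ≡ₘ " => MilMinus

namespace MilMinus

protected theorem ax {e f : StExp A} (h : MilAx e f) : e ≡ₘ f := EqDeriv.ax h

protected theorem refl (e : StExp A) : e ≡ₘ e := EqDeriv.refl e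

protected theorem symm {e f : StExp A} (h : e ≡ₘ f) : f ≡ₘ e := EqDeriv.symm h

protected theorem trans {e f g : StExp A} (h₁ : e ≡ₘ f) (h₂ : f ≡ₘ g) : e ≡ₘ g :=
  EqDeriv.trans h₁ h₂

instance : Trans (@MilMinus A) MilMinus MilMinus := ⟨MilMinus.trans⟩

protected theorem add {e₁ f₁ e₂ f₂ : StExp A} (h₁ : e₁ ≡ₘ f₁) (h₂ : e₂ ≡ₘ f₂) :
    e₁ + e₂ ≡ₘ f₁ + f₂ :=
  EqDeriv.addCongr h₁ h₂

protected theorem mul {e₁ f₁ e₂ f₂ : StExp A} (h₁ : e₁ ≡ₘ f₁) (h₂ : e₂ ≡ₘ f₂) :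
    e₁ * e₂ ≡ₘ f₁ * f₂ :=
  EqDeriv.mulCongr h₁ h₂

protected theorem star {e f : StExp A} (h : e ≡ₘ f) : e.star ≡ₘ f.star :=
  EqDeriv.starCongr h

theorem add_left {e f : StExp A} (g : StExp A) (h : e ≡ₘ f) : e + g ≡ₘ f + g :=
  h.add (.refl g)

theorem add_right (e : StExp A) {f g : StExp A} (h : f ≡ₘ g) : e + f ≡ₘ e + g :=
  (MilMinus.refl e).add h

theorem zero_add (e : StExp A) : 0 + e ≡ₘ e :=
  (MilMinus.ax (.commAdd _ _)).trans (.ax (.addZero _))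

theorem add_right_comm (a b c : StExp A) : (a + b) + c ≡ₘ (a + c) + b :=
  calc (a + b) + c
    _ ≡ₘ a + (b + c) := .ax (.assocAdd _ _ _)
    _ ≡ₘ a + (c + b) := add_right a (.ax (.commAdd _ _))
    _ ≡ₘ (a + c) + b := .symm (.ax (.assocAdd _ _ _))

theorem add_add_add_comm (a b c d : StExp A) : (a + b) + (c + d) ≡ₘ (a + c) + (b + d) :=
  calc (a + b) + (c + d)
    _ ≡ₘ ((a + b) + c) + d := .symm (.ax (.assocAdd _ _ _))
    _ ≡ₘ ((a + c) + b) + d := add_left d (add_right_comm a b c)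
    _ ≡ₘ (a + c) + (b + d) := .ax (.assocAdd _ _ _)

end MilMinus

open MilMinus

theorem listSum_append (l₁ l₂ : List (StExp A)) :
    listSum (l₁ ++ l₂) ≡ₘ listSum l₁ + listSum l₂ := by
  induction l₁ with
  | nil => exact .symm (zero_add _)
  | cons x l ih => exact (add_left x ih).trans (add_right_comm _ _ _)

theorem listSum_add_of_mem {x : StExp A} {l : List (StExp A)} (h : x ∈ l) :
    listSum l + x ≡ₘ listSum l := by
  induction l with
  | nil => cases h
  | cons y l ih =>
    rcases List.mem_cons.mp h with rfl | hx
    · exact (MilMinus.ax (.assocAdd _ _ _)).trans (add_right _ (.ax (.idemAdd _)))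
    · exact (add_right_comm _ _ _).trans (add_left y (ih hx))

theorem listSum_add_of_subset {l₁ l₂ : List (StExp A)} (h : l₁ ⊆ l₂) :
    listSum l₂ + listSum l₁ ≡ₘ listSum l₂ := by
  induction l₁ with
  | nil => exact .ax (.addZero _)
  | cons x l ih =>
    calc listSum l₂ + (listSum l + x)
      _ ≡ₘ (listSum l₂ + listSum l) + x := .symm (.ax (.assocAdd _ _ _))
      _ ≡ₘ listSum l₂ + x := add_left x (ih (List.subset_of_cons_subset h))
      _ ≡ₘ listSum l₂ := listSum_add_of_mem (h List.mem_cons_self)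

theorem listSum_congr_of_subset {l₁ l₂ : List (StExp A)} (h₁₂ : l₁ ⊆ l₂) (h₂₁ : l₂ ⊆ l₁) :
    listSum l₁ ≡ₘ listSum l₂ :=
  calc listSum l₁
    _ ≡ₘ listSum l₁ + listSum l₂ := .symm (listSum_add_of_subset h₂₁)
    _ ≡ₘ listSum l₂ + listSum l₁ := .ax (.commAdd _ _)
    _ ≡ₘ listSum l₂ := listSum_add_of_subset h₁₂

theorem termB_iff_term (e : StExp A) : termB e = true ↔ Term e := by
  induction e with
  | zero => exact iff_of_false Bool.false_ne_true (by rintro ⟨⟩)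
  | one => exact iff_of_true rfl Term.one
  | act a => exact iff_of_false Bool.false_ne_true (by rintro ⟨⟩)
  | add e f ihe ihf =>
    simp only [termB, Bool.or_eq_true, ihe, ihf]
    constructor
    · rintro (h | h)
      exacts [Term.addL h, Term.addR h]
    · rintro (_ | _ | h | h)
      exacts [Or.inl ‹_›, Or.inr ‹_›]
  | mul e f ihe ihf =>
    simp only [termB, Bool.and_eq_true, ihe, ihf]
    constructor
    · rintro ⟨h₁, h₂⟩; exact Term.mul h₁ h₂
    · rintro (_ | _ | _ | ⟨h₁, h₂⟩); exact ⟨‹_›, ‹_›⟩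
  | star e => exact iff_of_true rfl (Term.star e)

/-- The termination constant `τ(e)`. -/
def termConst (e : StExp A) : StExp A := if termB e then 1 else 0

def actSum (l : List (A × StExp A)) : StExp A := listSum (l.map fun p => StExp.act p.1 * p.2)

theorem actSum_append (l₁ l₂ : List (A × StExp A)) :
    actSum (l₁ ++ l₂) ≡ₘ actSum l₁ + actSum l₂ := by
  simpa only [actSum, List.map_append] using listSum_append _ _

theorem actSum_mul (l : List (A × StExp A)) (g : StExp A) :
    actSum l * g ≡ₘ actSum (l.map fun p => (p.1, p.2 * g)) := by
  induction l with
  | nil => exact .ax (.zeroMul _)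
  | cons p l ih => exact (MilMinus.ax (.rdistr _ _ _)).trans (ih.add (.ax (.assocMul _ _ _)))

theorem actSum_congr_of_subset {l₁ l₂ : List (A × StExp A)} (h₁₂ : l₁ ⊆ l₂) (h₂₁ : l₂ ⊆ l₁) :
    actSum l₁ ≡ₘ actSum l₂ :=
  listSum_congr_of_subset (List.map_subset _ h₁₂) (List.map_subset _ h₂₁)

def derivs : StExp A → List (A × StExp A)
  | .zero => []
  | .one => []
  | .act a => [(a, 1)]
  | .add e f => derivs e ++ derivs f
  | .mul e f =>
      (derivs e).map (fun p => (p.1, p.2 * f)) ++ if termB e then derivs f else []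
  | .star e => (derivs e).map (fun p => (p.1, p.2 * e.star))

theorem mem_derivs {e : StExp A} {p : A × StExp A} : p ∈ derivs e ↔ Step e p.1 p.2 := by
  obtain ⟨a, x⟩ := p
  induction e generalizing x with
  | zero => simp only [derivs, List.not_mem_nil, false_iff]; rintro ⟨⟩
  | one => simp only [derivs, List.not_mem_nil, false_iff]; rintro ⟨⟩
  | act b =>
    simp only [derivs, List.mem_singleton, Prod.mk.injEq]
    constructor
    · rintro ⟨rfl, rfl⟩; exact Step.act _
    · rintro ⟨⟩; exact ⟨rfl, rfl⟩
  | add e f ihe ihf =>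
    simp only [derivs, List.mem_append, ihe, ihf]
    constructor
    · rintro (h | h)
      exacts [Step.addL h, Step.addR h]
    · intro h
      cases h with
      | addL h => exact Or.inl h
      | addR h => exact Or.inr h
  | mul e f ihe ihf =>
    simp only [derivs, List.mem_append, List.mem_map, Prod.exists, Prod.mk.injEq]
    constructor
    · rintro (⟨b, y, hy, rfl, rfl⟩ | h)
      · exact Step.mulL ((ihe _).mp hy)
      · split_ifs at h with ht
        · exact Step.mulR ((termB_iff_term e).mp ht) ((ihf _).mp h)
        · cases h
    · intro h
      cases h with
      | mulL h => exact Or.inl ⟨_, _, (ihe _).mpr h, rfl, rfl⟩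
      | mulR ht h => exact Or.inr (by rw [if_pos ((termB_iff_term e).mpr ht)]; exact (ihf _).mpr h)
  | star e ih =>
    simp only [derivs, List.mem_map, Prod.exists, Prod.mk.injEq]
    constructor
    · rintro ⟨b, y, hy, rfl, rfl⟩; exact Step.star ((ih _).mp hy)
    · intro h
      cases h with
      | star h => exact ⟨_, _, (ih _).mpr h, rfl, rfl⟩

theorem termConst_add (e f : StExp A) : termConst (e + f) ≡ₘ termConst e + termConst f := by
  change (if (termB e || termB f) then 1 else 0) ≡ₘ termConst e + termConst f
  unfold termConst
  cases termB e <;> cases termB f <;> simp only [Bool.or_self, Bool.or_true, Bool.true_or]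
  · exact .symm (.ax (.addZero _))
  · exact .symm (zero_add _)
  · exact .symm (.ax (.addZero _))
  · exact .symm (.ax (.idemAdd _))

theorem add_expansion {e f : StExp A} (he : e ≡ₘ termConst e + actSum (derivs e))
    (hf : f ≡ₘ termConst f + actSum (derivs f)) :
    e + f ≡ₘ termConst (e + f) + actSum (derivs (e + f)) :=
  calc e + f
    _ ≡ₘ (termConst e + actSum (derivs e)) + (termConst f + actSum (derivs f)) := he.add hf
    _ ≡ₘ (termConst e + termConst f) + (actSum (derivs e) + actSum (derivs f)) :=
      add_add_add_comm _ _ _ _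
    _ ≡ₘ termConst (e + f) + actSum (derivs e ++ derivs f) :=
      (termConst_add e f).symm.add (actSum_append _ _).symm

theorem mul_expansion {e f : StExp A} (he : e ≡ₘ termConst e + actSum (derivs e))
    (hf : f ≡ₘ termConst f + actSum (derivs f)) :
    e * f ≡ₘ termConst (e * f) + actSum (derivs (e * f)) := by
  set s := actSum ((derivs e).map fun p => (p.1, p.2 * f))
  have hmul : e * f ≡ₘ termConst e * f + s :=
    calc e * f
      _ ≡ₘ (termConst e + actSum (derivs e)) * f := he.mul (.refl f)
      _ ≡ₘ termConst e * f + actSum (derivs e) * f := .ax (.rdistr _ _ _)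
      _ ≡ₘ termConst e * f + s := add_right _ (actSum_mul _ _)
  have hderivs : derivs (e * f) =
      (derivs e).map (fun p => (p.1, p.2 * f)) ++ if termB e then derivs f else [] := rfl
  have hconst : termConst (e * f) = if termB e then termConst f else 0 := by
    change (if (termB e && termB f) = true then (1 : StExp A) else 0) = _
    cases termB e <;> rfl
  by_cases ht : termB e
  · rw [hderivs, hconst, if_pos ht, if_pos ht]
    calc e * f
      _ ≡ₘ 1 * f + s := by rwa [termConst, if_pos ht] at hmul
      _ ≡ₘ (termConst f + actSum (derivs f)) + s := add_left s ((MilMinus.ax (.oneMul f)).trans hf)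
      _ ≡ₘ termConst f + (s + actSum (derivs f)) :=
        (MilMinus.ax (.assocAdd _ _ _)).trans (add_right _ (.ax (.commAdd _ _)))
      _ ≡ₘ termConst f + actSum (_ ++ derivs f) := add_right _ (actSum_append _ _).symm
  · rw [hderivs, hconst, if_neg ht, if_neg ht, List.append_nil]
    calc e * f
      _ ≡ₘ 0 * f + s := by rwa [termConst, if_neg ht] at hmul
      _ ≡ₘ 0 + s := add_left s (.ax (.zeroMul f))

theorem star_congr_of_eq_termConst_add {e s : StExp A} (h : e ≡ₘ termConst e + s) :
    e.star ≡ₘ s.star := by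
  unfold termConst at h
  split_ifs at h
  · exact h.star.trans (.symm (.ax (.trmBody s)))
  · exact h.star.trans (zero_add s).star

theorem star_expansion {e : StExp A} (he : e ≡ₘ termConst e + actSum (derivs e)) :
    e.star ≡ₘ termConst e.star + actSum (derivs e.star) :=
  have hstar : e.star ≡ₘ (actSum (derivs e)).star := star_congr_of_eq_termConst_add he
  calc e.star
    _ ≡ₘ (actSum (derivs e)).star := hstar
    _ ≡ₘ 1 + actSum (derivs e) * (actSum (derivs e)).star := .ax (.recStar _)
    _ ≡ₘ 1 + actSum (derivs e) * e.star := add_right 1 ((MilMinus.refl _).mul hstar.symm)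
    _ ≡ₘ 1 + actSum ((derivs e).map fun p => (p.1, p.2 * e.star)) := add_right 1 (actSum_mul _ _)

theorem eq_termConst_add_actSum_derivs (e : StExp A) :
    e ≡ₘ termConst e + actSum (derivs e) := by
  induction e with
  | zero => exact .symm (.ax (.addZero _))
  | one => exact .symm (.ax (.addZero _))
  | act a => exact .symm ((zero_add _).trans ((zero_add _).trans (.ax (.mulOne _))))
  | add e f he hf => exact add_expansion he hf
  | mul e f he hf => exact mul_expansion he hf
  | star e he => exact star_expansion he

end RegEx

open RegEx in
theorem stmt_2_general {A : Type} (e : StExp A) (l : List (A × StExp A))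
    (hl : ∀ p : A × StExp A, p ∈ l ↔ Step e p.1 p.2) :
    MilMinus e ((if termB e then 1 else 0) +
      listSum (l.map fun p => StExp.act p.1 * p.2)) :=
  (eq_termConst_add_actSum_derivs e).trans <| MilMinus.add_right _ <|
    actSum_congr_of_subset (fun p hp => (hl p).mpr (mem_derivs.mp hp))
      (fun p hp => mem_derivs.mpr ((hl p).mp hp))

open RegEx in
/-- in `Mil⁻` every star expression is provably equal to its
termination constant plus the sum over (any enumeration of) its action derivatives. -/
theorem stmt_2 {A : Type} (e : StExp A) (l : List (A × StExp A))
    (hl : ∀ p : A × StExp A, p ∈ l ↔ Step e p.1 p.2) (hnd : l.Nodup) :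
    MilMinus e ((if termB e then 1 else 0) +
      listSum (l.map fun p => StExp.act p.1 * p.2)) :=
  stmt_2_general e l hl
end

section
/- The set of expressions reachable from a star expression e under the SOS transition relation is finite; i.e., the chart interpretation of e is a finite-state labelled transition system. -/
namespace RegEx

/-- A finite closure superset of the reachable expressions. -/
def cl {A : Type} : StExp A → Set (StExp A)
  | .zero => {.zero}
  | .one => {.one}
  | .act a => {.act a, .one}
  | .add e f => {StExp.add e f} ∪ cl e ∪ cl f
  | .mul e f => ((· * f) '' cl e) ∪ cl f
  | .star e => {e.star} ∪ ((· * e.star) '' cl e)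

theorem cl_finite {A : Type} (e : StExp A) : (cl e).Finite := by
  induction e with
  | zero => exact Set.finite_singleton _
  | one => exact Set.finite_singleton _
  | act a => exact (Set.finite_singleton _).insert _
  | add e f ih1 ih2 => exact ((Set.finite_singleton _).union ih1).union ih2
  | mul e f ih1 ih2 => exact (ih1.image _).union ih2
  | star e ih => exact (Set.finite_singleton _).union (ih.image _)

theorem mem_cl_self {A : Type} (e : StExp A) : e ∈ cl e := by
  induction e with
  | zero => exact rfl
  | one => exact rfl
  | act a => exact Or.inl rfl
  | add e f ih1 ih2 => exact Or.inl (Or.inl rfl)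
  | mul e f ih1 ih2 => exact Or.inl ⟨e, ih1, rfl⟩
  | star e ih => exact Or.inl rfl

theorem cl_closed {A : Type} (e : StExp A) :
    ∀ x ∈ cl e, ∀ a y, Step x a y → y ∈ cl e := by
  induction e with
  | zero =>
    rintro x rfl a y h; cases h
  | one =>
    rintro x rfl a y h; cases h
  | act b =>
    rintro x (rfl | rfl) a y h
    · cases h; exact Or.inr rfl
    · cases h
  | add e f ih1 ih2 =>
    rintro x ((rfl | hx) | hx) a y h
    · cases h with
      | addL h => exact Or.inl (Or.inr (ih1 e (mem_cl_self e) a y h))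
      | addR h => exact Or.inr (ih2 f (mem_cl_self f) a y h)
    · exact Or.inl (Or.inr (ih1 x hx a y h))
    · exact Or.inr (ih2 x hx a y h)
  | mul e f ih1 ih2 =>
    rintro x (⟨z, hz, rfl⟩ | hx) a y h
    · cases h with
      | mulL h => exact Or.inl ⟨_, ih1 z hz a _ h, rfl⟩
      | mulR ht h => exact Or.inr (ih2 f (mem_cl_self f) a y h)
    · exact Or.inr (ih2 x hx a y h)
  | star e ih =>
    rintro x (rfl | ⟨z, hz, rfl⟩) a y h
    · cases h with
      | star h => exact Or.inr ⟨_, ih e (mem_cl_self e) a _ h, rfl⟩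
    · cases h with
      | mulL h => exact Or.inr ⟨_, ih z hz a _ h, rfl⟩
      | mulR ht h =>
        cases h with
        | star h => exact Or.inr ⟨_, ih e (mem_cl_self e) a _ h, rfl⟩

end RegEx
open RegEx in
/-- the set of expressions reachable from a star expression under the
SOS transition relation is finite. -/
theorem stmt_3 {A : Type} (e : StExp A) :
    {f : StExp A | Relation.ReflTransGen (fun x y => ∃ a, Step x a y) e f}.Finite := by
  apply (cl_finite e).subset
  intro f hf
  induction hf with
  | refl => exact mem_cl_self e
  | tail _ h ih => obtain ⟨a, h⟩ := h; exact cl_closed e _ ih a _ h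
end

section
/- Let e, f, g be star expressions with ¬f↓ and let Γ = {e = f·e + g}. Then e is the principal value of a (Mil⁻ + Γ)-provable solution of the 1-chart interpretation of f*·g. Concretely, the function s defined on the vertices of the 1-chart interpretation of f*·g by s(f*·g) := e, s((F ⋆ f*)·g) := π(F)·e for iterated 1-derivatives F of f, and s(G) := π(G) for iterated 1-derivatives G of g, satisfies at every vertex E the condition s(E) =_{Mil⁻+Γ} τ(E) + Σ_{(ā,E') ∈ A∂₁(E)} ā · s(E'). -/
/-! Modulo `Mil⁻`, star expressions form an idempotent commutative monoid under `+`, and a monoid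
under `·` that distributes over `+` from the right. In this structure every iterated derivative
`D` of an ordinary star expression (so `⋆` occurs in `D` only along its left spine) satisfies the
fundamental theorem `π(D) = τ(D) + Σ ā · π(D')`; at a star the recursion `h* = 1 + h · h*`,
together with `(1 + h)* = h*`, absorbs the termination constant of the body.

The proposed solution therefore satisfies its equation at the derivatives of `g` directly. At
`(F ⋆ f*)·g` one multiplies the expansion of `π(F)` by `e` on the right, the 1-transition back to
`f*·g` supplying the summand `τ(F) · e`. At `f*·g` one uses the assumption `e = f·e + g` and expands
`f` and `g`; since `¬f↓`, the expansion of `f` has no constant term. -/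

theorem List.sum_add_sum_of_subset {M : Type*} [AddCommMonoid M] (hidem : ∀ x : M, x + x = x)
    {L₁ L₂ : List M} (h : L₁ ⊆ L₂) : L₂.sum + L₁.sum = L₂.sum := by
  classical
  induction L₁ with
  | nil => simp
  | cons x L ih =>
    obtain ⟨hx, hL⟩ := List.cons_subset.mp h
    have habsorb : L₂.sum + x = L₂.sum := by
      rw [(List.perm_cons_erase hx).sum_eq, List.sum_cons, add_right_comm, hidem]
    rw [List.sum_cons, ← add_assoc, habsorb, ih hL]

theorem List.sum_eq_of_mem_iff {M : Type*} [AddCommMonoid M] (hidem : ∀ x : M, x + x = x)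
    {L₁ L₂ : List M} (h : ∀ x, x ∈ L₁ ↔ x ∈ L₂) : L₁.sum = L₂.sum := by
  rw [← List.sum_add_sum_of_subset hidem fun x hx => (h x).mpr hx, add_comm,
    List.sum_add_sum_of_subset hidem fun x hx => (h x).mp hx]

namespace RegEx

variable {A : Type}

theorem EqDeriv.mono {ax ax' : StExp A → StExp A → Prop} (h : ∀ x y, ax x y → ax' x y)
    {e f : StExp A} (d : EqDeriv ax e f) : EqDeriv ax' e f := by
  induction d with
  | ax hxy => exact .ax (h _ _ hxy)
  | refl e => exact .refl e
  | symm _ ih => exact ih.symm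
  | trans _ _ ih₁ ih₂ => exact ih₁.trans ih₂
  | addCongr _ _ ih₁ ih₂ => exact ih₁.addCongr ih₂
  | mulCongr _ _ ih₁ ih₂ => exact ih₁.mulCongr ih₂
  | starCongr _ ih => exact ih.starCongr

instance milSetoid : Setoid (StExp A) where
  r := MilMinus
  iseqv := ⟨EqDeriv.refl, EqDeriv.symm, EqDeriv.trans⟩

abbrev MilQuot (A : Type) := Quotient (milSetoid (A := A))

theorem EqDeriv.of_mk_eq {ax : StExp A → StExp A → Prop} (hax : ∀ x y, MilAx x y → ax x y)
    {x y : StExp A} (h : (⟦x⟧ : MilQuot A) = ⟦y⟧) : EqDeriv ax x y :=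
  (Quotient.exact h).mono hax

namespace MilQuot

instance : Zero (MilQuot A) := ⟨⟦0⟧⟩
instance : One (MilQuot A) := ⟨⟦1⟧⟩
instance : Add (MilQuot A) := ⟨Quotient.map₂ (· + ·) fun _ _ h₁ _ _ h₂ => EqDeriv.addCongr h₁ h₂⟩
instance : Mul (MilQuot A) := ⟨Quotient.map₂ (· * ·) fun _ _ h₁ _ _ h₂ => EqDeriv.mulCongr h₁ h₂⟩

@[simp] theorem mk_zero : (⟦0⟧ : MilQuot A) = 0 := rfl
@[simp] theorem mk_one : (⟦1⟧ : MilQuot A) = 1 := rfl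
@[simp] theorem mk_add (e f : StExp A) : (⟦e + f⟧ : MilQuot A) = ⟦e⟧ + ⟦f⟧ := rfl
@[simp] theorem mk_mul (e f : StExp A) : (⟦e * f⟧ : MilQuot A) = ⟦e⟧ * ⟦f⟧ := rfl

theorem sound {e f : StExp A} (h : MilAx e f) : (⟦e⟧ : MilQuot A) = ⟦f⟧ :=
  Quotient.sound (EqDeriv.ax h)

instance : AddCommMonoid (MilQuot A) where
  add_assoc := by rintro ⟨a⟩ ⟨b⟩ ⟨c⟩; exact sound (.assocAdd a b c)
  add_zero := by rintro ⟨a⟩; exact sound (.addZero a)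
  zero_add := by rintro ⟨a⟩; exact (sound (.commAdd 0 a)).trans (sound (.addZero a))
  add_comm := by rintro ⟨a⟩ ⟨b⟩; exact sound (.commAdd a b)
  nsmul := nsmulRec

instance : Monoid (MilQuot A) where
  mul_assoc := by rintro ⟨a⟩ ⟨b⟩ ⟨c⟩; exact sound (.assocMul a b c)
  one_mul := by rintro ⟨a⟩; exact sound (.oneMul a)
  mul_one := by rintro ⟨a⟩; exact sound (.mulOne a)

instance : RightDistribClass (MilQuot A) where
  right_distrib := by rintro ⟨a⟩ ⟨b⟩ ⟨c⟩; exact sound (.rdistr a b c)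

theorem add_self (x : MilQuot A) : x + x = x := by
  induction x using Quotient.inductionOn with
  | h a => exact sound (.idemAdd a)

protected theorem zero_mul (x : MilQuot A) : 0 * x = 0 := by
  induction x using Quotient.inductionOn with
  | h a => exact sound (.zeroMul a)

theorem mk_star_eq (e : StExp A) : (⟦e.star⟧ : MilQuot A) = 1 + ⟦e⟧ * ⟦e.star⟧ :=
  sound (.recStar e)

theorem mk_star_eq_of_eq_add {e : StExp A} {b : Bool} {S : MilQuot A}
    (h : (⟦e⟧ : MilQuot A) = ⟦if b then 1 else 0⟧ + S) :
    (⟦e.star⟧ : MilQuot A) = 1 + S * ⟦e.star⟧ := by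
  obtain ⟨s, rfl⟩ := Quotient.exists_rep S
  cases b
  · simpa [h] using mk_star_eq e
  · have hstar : (⟦e.star⟧ : MilQuot A) = ⟦s.star⟧ :=
      (Quotient.sound (EqDeriv.starCongr (Quotient.exact h))).trans (sound (.trmBody s)).symm
    rw [hstar]
    exact mk_star_eq s

end MilQuot

theorem sTermB_iff {E : SExp A} : sTermB E = true ↔ STerm E := by
  refine ⟨fun h => ?_, fun h => ?_⟩
  · induction E with
    | add _ _ ih₁ ih₂ =>
      rcases Bool.or_eq_true_iff.mp h with h | h
      exacts [.addL (ih₁ h), .addR (ih₂ h)]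
    | mul _ _ ih₁ ih₂ =>
      obtain ⟨h₁, h₂⟩ := Bool.and_eq_true_iff.mp h
      exact .mul (ih₁ h₁) (ih₂ h₂)
    | one => exact .one
    | star e => exact .star e
    | _ => simp [sTermB] at h
  · induction h <;> simp_all [sTermB]

theorem Term.of_sTerm_emb {h : StExp A} (ht : STerm (emb h)) : Term h := by
  induction h with
  | add _ _ ih₁ ih₂ =>
    cases ht with
    | addL ht => exact .addL (ih₁ ht)
    | addR ht => exact .addR (ih₂ ht)
  | mul _ _ ih₁ ih₂ =>
    cases ht with
    | mul ht₁ ht₂ => exact .mul (ih₁ ht₁) (ih₂ ht₂)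
  | one => exact .one
  | star e => exact .star e
  | _ => cases ht

theorem proj_emb (h : StExp A) : proj (emb h) = h := by
  induction h with
  | zero | one | act => rfl
  | add _ _ ih₁ ih₂ | mul _ _ ih₁ ih₂ => exact congrArg₂ _ ih₁ ih₂
  | star _ ih => exact congrArg StExp.star ih

theorem emb_injective : Function.Injective (emb : StExp A → SExp A) :=
  Function.LeftInverse.injective proj_emb

theorem not_sStep_none_emb (h : StExp A) {E : SExp A} : ¬ SStep (emb h) none E := by
  induction h generalizing E with
  | mul _ _ ih₁ _ =>
    intro hs
    cases hs with
    | mulL hs => exact ih₁ hs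
  | _ => rintro ⟨⟩

/-- The transitions of a stacked star expression, in the order of the TSS rules. The filters drop
the 1-transitions, which the rules for `+`, for the right factor of `·` and for `*` do not
propagate. -/
def steps : SExp A → List (Option A × SExp A)
  | .zero => []
  | .one => []
  | .act a => [(some a, SExp.one)]
  | .add e₁ e₂ => (steps e₁ ++ steps e₂).filter (·.1.isSome)
  | .mul E₁ e₂ =>
      (steps E₁).map (fun p => (p.1, SExp.mul p.2 e₂)) ++
        (if sTermB E₁ then (steps e₂).filter (·.1.isSome) else [])
  | .star e => ((steps e).filter (·.1.isSome)).map fun p => (p.1, SExp.smul p.2 (SExp.star e))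
  | .smul E₁ f => (steps E₁).map (fun p => (p.1, SExp.smul p.2 f)) ++
      (if sTermB E₁ then [(none, f)] else [])

theorem mem_steps_of_sStep {E E' : SExp A} {l : Option A} (h : SStep E l E') :
    (l, E') ∈ steps E := by
  induction h <;> simp_all [steps, sTermB_iff.mpr]

theorem sStep_of_mem_steps {E : SExp A} {p : Option A × SExp A} (hp : p ∈ steps E) :
    SStep E p.1 p.2 := by
  induction E generalizing p with
  | zero | one => simp [steps] at hp
  | act a => simp only [steps, List.mem_singleton] at hp; exact hp ▸ .act a
  | add e₁ e₂ ih₁ ih₂ =>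
    simp only [steps, List.mem_filter, List.mem_append] at hp
    obtain ⟨h | h, hl⟩ := hp <;> obtain ⟨a, ha⟩ := Option.isSome_iff_exists.mp hl
    · exact ha ▸ .addL (ha ▸ ih₁ h)
    · exact ha ▸ .addR (ha ▸ ih₂ h)
  | mul E₁ e₂ ih₁ ih₂ =>
    simp only [steps, List.mem_append, List.mem_map] at hp
    rcases hp with ⟨q, hq, rfl⟩ | hp
    · exact .mulL (ih₁ hq)
    · split_ifs at hp with hb
      · obtain ⟨hq, hl⟩ := List.mem_filter.mp hp
        obtain ⟨a, ha⟩ := Option.isSome_iff_exists.mp hl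
        exact ha ▸ .mulR (sTermB_iff.mp hb) (ha ▸ ih₂ hq)
      · simp at hp
  | star e ih =>
    simp only [steps, List.mem_map, List.mem_filter] at hp
    obtain ⟨q, ⟨hq, hl⟩, rfl⟩ := hp
    obtain ⟨a, ha⟩ := Option.isSome_iff_exists.mp hl
    exact ha ▸ .star (ha ▸ ih hq)
  | smul E₁ f ih₁ _ =>
    simp only [steps, List.mem_append, List.mem_map] at hp
    rcases hp with ⟨q, hq, rfl⟩ | hp
    · exact .smulL (ih₁ hq)
    · split_ifs at hp with hb
      · exact (List.mem_singleton.mp hp) ▸ .smulT (sTermB_iff.mp hb)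
      · simp at hp

theorem mem_steps {E : SExp A} {p : Option A × SExp A} : p ∈ steps E ↔ SStep E p.1 p.2 :=
  ⟨sStep_of_mem_steps, mem_steps_of_sStep⟩

theorem filter_steps_eq_self {E : SExp A} (h : ∀ E', ¬ SStep E none E') :
    (steps E).filter (·.1.isSome) = steps E :=
  List.filter_eq_self.mpr fun ⟨l, E'⟩ hp => by
    cases l
    exacts [(h E' (mem_steps.mp hp)).elim, rfl]

def transSum (s : SExp A → MilQuot A) (l : List (Option A × SExp A)) : MilQuot A :=
  (l.map fun p => ⟦lab p.1⟧ * s p.2).sum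

@[simp] theorem transSum_nil (s : SExp A → MilQuot A) : transSum s [] = 0 := rfl

@[simp] theorem transSum_cons (s : SExp A → MilQuot A) (p : Option A × SExp A) (l) :
    transSum s (p :: l) = ⟦lab p.1⟧ * s p.2 + transSum s l := List.sum_cons

@[simp] theorem transSum_append (s : SExp A → MilQuot A) (l₁ l₂ : List (Option A × SExp A)) :
    transSum s (l₁ ++ l₂) = transSum s l₁ + transSum s l₂ := by
  simp [transSum]

theorem transSum_congr (s : SExp A → MilQuot A) {l₁ l₂ : List (Option A × SExp A)}
    (h : ∀ p, p ∈ l₁ ↔ p ∈ l₂) : transSum s l₁ = transSum s l₂ :=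
  List.sum_eq_of_mem_iff MilQuot.add_self fun x => by simp only [List.mem_map, h]

theorem transSum_congr_left {s t : SExp A → MilQuot A} {l : List (Option A × SExp A)}
    (h : ∀ p ∈ l, s p.2 = t p.2) : transSum s l = transSum t l :=
  congrArg List.sum (List.map_congr_left fun p hp => by rw [h p hp])

theorem mk_listSum_map (s : SExp A → StExp A) (l : List (Option A × SExp A)) :
    (⟦listSum (l.map fun p => lab p.1 * s p.2)⟧ : MilQuot A) = transSum (fun X => ⟦s X⟧) l := by
  induction l with
  | nil => rfl
  | cons p l ih => rw [List.map_cons, listSum, MilQuot.mk_add, ih, transSum_cons, add_comm]; rfl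

/-- The right-hand side `τ(E) + Σ ā · s(E')` of the equation of a solution `s` at `E`. -/
def stepExpansion (s : SExp A → MilQuot A) (E : SExp A) : MilQuot A :=
  ⟦sTau E⟧ + transSum s (steps E)

def projQ (E : SExp A) : MilQuot A := ⟦proj E⟧

@[simp] theorem projQ_zero : projQ (.zero : SExp A) = 0 := rfl
@[simp] theorem projQ_one : projQ (.one : SExp A) = 1 := rfl
@[simp] theorem projQ_act (a : A) : projQ (.act a) = ⟦StExp.act a⟧ := rfl
@[simp] theorem projQ_add (E F : SExp A) : projQ (.add E F) = projQ E + projQ F := rfl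
@[simp] theorem projQ_mul (E F : SExp A) : projQ (.mul E F) = projQ E * projQ F := rfl
@[simp] theorem projQ_smul (E F : SExp A) : projQ (.smul E F) = projQ E * projQ F := rfl

theorem transSum_map_of_eq_mul {s : SExp A → MilQuot A} {φ : SExp A → SExp A} {c : MilQuot A}
    (h : ∀ X, s (φ X) = projQ X * c) (l : List (Option A × SExp A)) :
    transSum s (l.map fun p => (p.1, φ p.2)) = transSum projQ l * c := by
  induction l with
  | nil => exact (MilQuot.zero_mul c).symm
  | cons p l ih => simp [ih, h, add_mul, mul_assoc]

theorem mk_sTau_add (E₁ E₂ : SExp A) :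
    (⟦sTau (.add E₁ E₂)⟧ : MilQuot A) = ⟦sTau E₁⟧ + ⟦sTau E₂⟧ := by
  simp only [sTau, sTermB, Bool.or_eq_true]
  split_ifs <;> simp_all [MilQuot.add_self]

/-- The fundamental theorem for `E`. -/
def HasExpansion (E : SExp A) : Prop := projQ E = stepExpansion projQ E

theorem hasExpansion_zero : HasExpansion (.zero : SExp A) := by
  simp [HasExpansion, stepExpansion, steps, sTau, sTermB]

theorem hasExpansion_one : HasExpansion (.one : SExp A) := by
  simp [HasExpansion, stepExpansion, steps, sTau, sTermB]

theorem hasExpansion_act (a : A) : HasExpansion (.act a) := by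
  simp [HasExpansion, stepExpansion, steps, sTau, sTermB, lab]

theorem HasExpansion.add {E₁ E₂ : SExp A} (h₁ : HasExpansion E₁) (h₂ : HasExpansion E₂)
    (n₁ : ∀ E', ¬ SStep E₁ none E') (n₂ : ∀ E', ¬ SStep E₂ none E') :
    HasExpansion (.add E₁ E₂) := by
  rw [HasExpansion, stepExpansion, mk_sTau_add, steps, List.filter_append,
    filter_steps_eq_self n₁, filter_steps_eq_self n₂, transSum_append, projQ_add, h₁, h₂]
  simp only [stepExpansion]
  abel

theorem HasExpansion.mul {E₁ e₂ : SExp A} (h₁ : HasExpansion E₁) (h₂ : HasExpansion e₂)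
    (n₂ : ∀ E', ¬ SStep e₂ none E') : HasExpansion (.mul E₁ e₂) := by
  have hmap := transSum_map_of_eq_mul (s := projQ) (φ := (SExp.mul · e₂)) (c := projQ e₂)
    (fun _ => rfl) (steps E₁)
  rw [HasExpansion, stepExpansion, projQ_mul, h₁, stepExpansion]
  cases hb : sTermB E₁
  · simp [steps, sTau, sTermB, hb, hmap]
  · simp only [steps, sTermB, hb, hmap, add_mul, filter_steps_eq_self n₂, if_true,
      Bool.true_and, transSum_append, sTau, MilQuot.mk_one, one_mul]
    nth_rewrite 1 [h₂]
    rw [stepExpansion, sTau]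
    abel

theorem HasExpansion.smul {E₁ : SExp A} (h₁ : HasExpansion E₁) (f : SExp A) :
    HasExpansion (.smul E₁ f) := by
  have hmap := transSum_map_of_eq_mul (s := projQ) (φ := (SExp.smul · f)) (c := projQ f)
    (fun _ => rfl) (steps E₁)
  rw [HasExpansion, stepExpansion, projQ_smul, h₁, stepExpansion]
  cases hb : sTermB E₁
  · simp [steps, sTau, sTermB, hb, hmap]
  · simp [steps, sTau, sTermB, hb, hmap, add_mul, lab, add_comm]

theorem HasExpansion.star {e : SExp A} (h : HasExpansion e) (n : ∀ E', ¬ SStep e none E') :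
    HasExpansion (.star e) := by
  have hmap := transSum_map_of_eq_mul (s := projQ) (φ := (SExp.smul · e.star))
    (c := projQ e.star) (fun _ => rfl) (steps e)
  rw [HasExpansion, stepExpansion, steps, filter_steps_eq_self n, hmap]
  exact MilQuot.mk_star_eq_of_eq_add h

theorem hasExpansion_emb (h : StExp A) : HasExpansion (emb h) := by
  induction h with
  | zero => exact hasExpansion_zero
  | one => exact hasExpansion_one
  | act a => exact hasExpansion_act a
  | add h₁ h₂ ih₁ ih₂ =>
    exact ih₁.add ih₂ (fun _ => not_sStep_none_emb h₁) (fun _ => not_sStep_none_emb h₂)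
  | mul _ h₂ ih₁ ih₂ => exact ih₁.mul ih₂ fun _ => not_sStep_none_emb h₂
  | star h ih => exact ih.star fun _ => not_sStep_none_emb h

/-- A grammar containing `emb h` and closed under transitions, hence containing all iterated
derivatives of `h`. -/
inductive IsDeriv : StExp A → SExp A → Prop
  | base (h : StExp A) : IsDeriv h (emb h)
  | act (a : A) : IsDeriv (StExp.act a) SExp.one
  | addL {h₁ h₂ : StExp A} {D : SExp A} : IsDeriv h₁ D → IsDeriv (.add h₁ h₂) D
  | addR {h₁ h₂ : StExp A} {D : SExp A} : IsDeriv h₂ D → IsDeriv (.add h₁ h₂) D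
  | mulL {h₁ h₂ : StExp A} {D : SExp A} :
      IsDeriv h₁ D → IsDeriv (.mul h₁ h₂) (SExp.mul D (emb h₂))
  | mulR {h₁ h₂ : StExp A} {D : SExp A} : IsDeriv h₂ D → IsDeriv (.mul h₁ h₂) D
  | star {h : StExp A} {D : SExp A} :
      IsDeriv h D → IsDeriv h.star (SExp.smul D (SExp.star (emb h)))

namespace IsDeriv

theorem of_sStep_emb {h : StExp A} {l : Option A} {D : SExp A} (hs : SStep (emb h) l D) :
    IsDeriv h D := by
  induction h generalizing l D with
  | zero | one => cases hs
  | act a => cases hs; exact .act a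
  | add _ _ ih₁ ih₂ =>
    cases hs with
    | addL hs => exact .addL (ih₁ hs)
    | addR hs => exact .addR (ih₂ hs)
  | mul _ _ ih₁ ih₂ =>
    cases hs with
    | mulL hs => exact .mulL (ih₁ hs)
    | mulR _ hs => exact .mulR (ih₂ hs)
  | star _ ih =>
    cases hs with
    | star hs => exact .star (ih hs)

theorem sStep {h : StExp A} {D D' : SExp A} {l : Option A} (hD : IsDeriv h D)
    (hs : SStep D l D') : IsDeriv h D' := by
  induction hD generalizing l D' with
  | base => exact of_sStep_emb hs
  | act => cases hs
  | addL _ ih => exact .addL (ih hs)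
  | addR _ ih => exact .addR (ih hs)
  | mulL _ ih =>
    cases hs with
    | mulL hs => exact .mulL (ih hs)
    | mulR _ hs => exact .mulR (of_sStep_emb hs)
  | mulR _ ih => exact .mulR (ih hs)
  | star _ ih =>
    cases hs with
    | smulL hs => exact .star (ih hs)
    | smulT _ => exact .base _

theorem of_reflTransGen {h : StExp A} {D : SExp A} (hD : Relation.ReflTransGen sR (emb h) D) :
    IsDeriv h D := by
  induction hD with
  | refl => exact .base h
  | tail _ hs ih => exact ih.sStep hs.choose_spec

theorem hasExpansion {h : StExp A} {D : SExp A} (hD : IsDeriv h D) : HasExpansion D := by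
  induction hD with
  | base h => exact hasExpansion_emb h
  | act => exact hasExpansion_one
  | addL _ ih | addR _ ih | mulR _ ih => exact ih
  | mulL _ ih => exact ih.mul (hasExpansion_emb _) fun _ => not_sStep_none_emb _
  | star _ ih => exact ih.smul _

theorem sizeOf_lt {h : StExp A} {D : SExp A} (hD : IsDeriv h D) :
    ∀ {X : SExp A} {h₂ : StExp A}, D = .mul X (emb h₂) → sizeOf h₂ < sizeOf h := by
  induction hD with
  | base h =>
    intro X h₂ hD
    cases h with
    | mul h₁ h₂' =>
      rw [← emb_injective (SExp.mul.inj hD).2, StExp.mul.sizeOf_spec]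
      omega
    | _ => cases hD
  | act | star => intro X h₂ hD; cases hD
  | mulL =>
    intro X h₂ hD
    rw [← emb_injective (SExp.mul.inj hD).2, StExp.mul.sizeOf_spec]
    omega
  | addL _ ih | addR _ ih | mulR _ ih =>
    intro X h₂ hD
    have := ih hD
    simp only [StExp.add.sizeOf_spec, StExp.mul.sizeOf_spec]
    omega

theorem ne_mul_emb {h : StExp A} {D : SExp A} (hD : IsDeriv h D) (X : SExp A) :
    D ≠ .mul X (emb h) :=
  fun hX => lt_irrefl _ (hD.sizeOf_lt hX)

end IsDeriv

section Solution

variable {e f g : StExp A}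

abbrev startVertex (f g : StExp A) : SExp A := .mul (.star (emb f)) (emb g)

abbrev loopVertex (f g : StExp A) (F : SExp A) : SExp A := .mul (.smul F (.star (emb f))) (emb g)

def IsVertex (f g : StExp A) (E : SExp A) : Prop :=
  E = startVertex f g ∨ (∃ F, IsDeriv f F ∧ E = loopVertex f g F) ∨ IsDeriv g E

theorem IsVertex.sStep {E E' : SExp A} {l : Option A} (hE : IsVertex f g E)
    (hs : SStep E l E') : IsVertex f g E' := by
  rcases hE with rfl | ⟨F, hF, rfl⟩ | hG
  · cases hs with
    | mulL hs => cases hs with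
      | star hs => exact .inr (.inl ⟨_, .of_sStep_emb hs, rfl⟩)
    | mulR _ hs => exact .inr (.inr (.of_sStep_emb hs))
  · cases hs with
    | mulL hs => cases hs with
      | smulL hs => exact .inr (.inl ⟨_, hF.sStep hs, rfl⟩)
      | smulT _ => exact .inl rfl
    | mulR ht => cases ht
  · exact .inr (.inr (hG.sStep hs))

theorem isVertex_of_reflTransGen {E : SExp A}
    (h : Relation.ReflTransGen sR (startVertex f g) E) : IsVertex f g E := by
  induction h with
  | refl => exact .inl rfl
  | tail _ hs ih => exact ih.sStep hs.choose_spec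

open Classical in
noncomputable def sol (e f g : StExp A) (E : SExp A) : StExp A :=
  if E = startVertex f g then e
  else if h : ∃ F, E = loopVertex f g F then proj h.choose * e
  else proj E

theorem sol_start : sol e f g (startVertex f g) = e := if_pos rfl

theorem sol_loop (F : SExp A) : sol e f g (loopVertex f g F) = proj F * e := by
  have hex : ∃ F', loopVertex f g F = loopVertex f g F' := ⟨F, rfl⟩
  rw [sol, if_neg (by simp), dif_pos hex, ← (SExp.smul.inj (SExp.mul.inj hex.choose_spec).1).1]

theorem sol_of_isDeriv {G : SExp A} (hG : IsDeriv g G) : sol e f g G = proj G := by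
  rw [sol, if_neg (hG.ne_mul_emb _), dif_neg fun ⟨_, hF⟩ => hG.ne_mul_emb _ hF]

theorem transSum_sol_loop (l : List (Option A × SExp A)) :
    transSum (fun X => ⟦sol e f g X⟧) (l.map fun p => (p.1, loopVertex f g p.2)) =
      transSum projQ l * ⟦e⟧ :=
  transSum_map_of_eq_mul (fun X => congrArg _ (sol_loop X)) l

theorem mk_sol_eq_of_isDeriv {G : SExp A} (hG : IsDeriv g G) :
    (⟦sol e f g G⟧ : MilQuot A) = stepExpansion (fun X => ⟦sol e f g X⟧) G := by
  rw [stepExpansion, transSum_congr_left (t := projQ) fun p hp => by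
    rw [sol_of_isDeriv (hG.sStep (mem_steps.mp hp))]; rfl, sol_of_isDeriv hG]
  exact hG.hasExpansion

theorem mk_sol_loop_eq {F : SExp A} (hF : IsDeriv f F) :
    (⟦sol e f g (loopVertex f g F)⟧ : MilQuot A) =
      stepExpansion (fun X => ⟦sol e f g X⟧) (loopVertex f g F) := by
  rw [sol_loop, MilQuot.mk_mul]
  change projQ F * ⟦e⟧ = _
  rw [hF.hasExpansion, stepExpansion, stepExpansion]
  cases hb : sTermB F <;>
    simp [steps, sTau, sTermB, hb, List.map_map, Function.comp_def, transSum_sol_loop, add_mul,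
      sol_start, lab, add_comm]

theorem mk_mul_add_eq_start (hf : ¬ Term f) :
    (⟦f * e + g⟧ : MilQuot A) = stepExpansion (fun X => ⟦sol e f g X⟧) (startVertex f g) := by
  have hsteps_g := transSum_congr_left (s := fun X => ⟦sol e f g X⟧) (t := projQ)
    fun p hp => by rw [sol_of_isDeriv (IsDeriv.of_sStep_emb (h := g) (mem_steps.mp hp))]; rfl
  have hnf : sTermB (emb f) = false :=
    Bool.eq_false_iff.mpr fun h => hf (Term.of_sTerm_emb (sTermB_iff.mp h))
  have hexp_f := hasExpansion_emb f
  have hexp_g := hasExpansion_emb g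
  rw [HasExpansion, projQ, proj_emb, stepExpansion] at hexp_f hexp_g
  simp [stepExpansion, steps, sTermB, filter_steps_eq_self fun _ => not_sStep_none_emb _,
    List.map_map, Function.comp_def, transSum_sol_loop, hsteps_g]
  rw [hexp_f, hexp_g]
  simp [sTau, sTermB, hnf]
  abel

end Solution

end RegEx

open RegEx in
/-- `e` is the principal value of a `(Mil⁻ + {e = f·e + g})`-provable
solution of the 1-chart interpretation of `f*·g`, given concretely as stated. -/
theorem stmt_14 {A : Type} (e f g : StExp A) (hf : ¬ Term f) :
    ∃ s : SExp A → StExp A,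
      s (SExp.mul (SExp.star (emb f)) (emb g)) = e ∧
      (∀ F : SExp A, Relation.TransGen sR (emb f) F →
        s (SExp.mul (SExp.smul F (SExp.star (emb f))) (emb g)) = proj F * e) ∧
      (∀ G : SExp A, Relation.TransGen sR (emb g) G → s G = proj G) ∧
      (∀ E : SExp A,
        Relation.ReflTransGen sR (SExp.mul (SExp.star (emb f)) (emb g)) E →
        ∀ l : List (Option A × SExp A),
          (∀ p : Option A × SExp A, p ∈ l ↔ SStep E p.1 p.2) → l.Nodup →
          EqDeriv (fun x y => MilAx x y ∨ (x = e ∧ y = f * e + g)) (s E)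
            (sTau E + listSum (l.map fun p => lab p.1 * s p.2))) := by
  refine ⟨sol e f g, sol_start, fun F _ => sol_loop F,
    fun G hG => sol_of_isDeriv (.of_reflTransGen hG.to_reflTransGen), fun E hE l hl _ => ?_⟩
  have hax : ∀ x y, MilAx x y → MilAx x y ∨ (x = e ∧ y = f * e + g) := fun _ _ => Or.inl
  have hrhs : (⟦sTau E + listSum (l.map fun p => lab p.1 * sol e f g p.2)⟧ : MilQuot A) =
      stepExpansion (fun X => ⟦sol e f g X⟧) E := by
    rw [MilQuot.mk_add, mk_listSum_map, transSum_congr _ fun p => (hl p).trans mem_steps.symm,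
      stepExpansion]
  rcases isVertex_of_reflTransGen hE with rfl | ⟨F, hF, rfl⟩ | hG
  · rw [sol_start]
    exact (EqDeriv.ax (Or.inr ⟨rfl, rfl⟩)).trans
      (.of_mk_eq hax ((mk_mul_add_eq_start hf).trans hrhs.symm))
  · exact .of_mk_eq hax ((mk_sol_loop_eq hF).trans hrhs.symm)
  · exact .of_mk_eq hax ((mk_sol_eq_of_isDeriv hG).trans hrhs.symm)
end

section
/- The vertices of the 1-chart interpretation of f*·g decompose as: V(C₁(f*·g)) = {f*·g} ∪ {(F ⋆ f*)·g : F an iterated 1-derivative of f} ∪ {G : G an iterated 1-derivative of g}. -/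
namespace RegEx

/-- Auxiliary: the expression contains no stacked product. -/
def NoSmul {A : Type} : SExp A → Prop
  | .zero => True
  | .one => True
  | .act _ => True
  | .add e f => NoSmul e ∧ NoSmul f
  | .mul e f => NoSmul e ∧ NoSmul f
  | .star e => NoSmul e
  | .smul _ _ => False

lemma emb_noSmul {A : Type} (e : StExp A) : NoSmul (emb e) := by
  induction e <;> simp [emb, NoSmul, *]

lemma noSmul_step_some {A : Type} {E : SExp A} {l : Option A} {E' : SExp A}
    (s : SStep E l E') (h : NoSmul E) : ∃ a, l = some a := by
  induction s with
  | act a => exact ⟨a, rfl⟩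
  | addL _ ih => exact ⟨_, rfl⟩
  | addR _ ih => exact ⟨_, rfl⟩
  | mulL _ ih => exact ih h.1
  | mulR _ _ _ => exact ⟨_, rfl⟩
  | star _ _ => exact ⟨_, rfl⟩
  | smulL _ _ => exact h.elim
  | smulT _ => exact h.elim

end RegEx
open RegEx in
/-- decomposition of the vertices of the 1-chart interpretation of
`f*·g`. -/
theorem stmt_15 {A : Type} (f g : StExp A) :
    {E : SExp A |
        Relation.ReflTransGen sR (SExp.mul (SExp.star (emb f)) (emb g)) E} =
      {SExp.mul (SExp.star (emb f)) (emb g)} ∪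
        {E : SExp A | ∃ F : SExp A, Relation.TransGen sR (emb f) F ∧
          E = SExp.mul (SExp.smul F (SExp.star (emb f))) (emb g)} ∪
        {G : SExp A | Relation.TransGen sR (emb g) G} := by
  ext E
  simp only [Set.mem_setOf_eq, Set.mem_union, Set.mem_singleton_iff]
  constructor
  · intro h
    induction h with
    | refl => exact Or.inl (Or.inl rfl)
    | tail hr hs ih =>
      obtain ⟨l, hs⟩ := hs
      rcases ih with (rfl | ⟨F, hF, rfl⟩) | hG
      · cases hs with
        | mulL s =>
          cases s with
          | star s => exact Or.inl (Or.inr ⟨_, Relation.TransGen.single ⟨_, s⟩, rfl⟩)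
        | mulR ht s => exact Or.inr (Relation.TransGen.single ⟨_, s⟩)
      · cases hs with
        | mulL s =>
          cases s with
          | smulL s => exact Or.inl (Or.inr ⟨_, hF.tail ⟨_, s⟩, rfl⟩)
          | smulT ht => exact Or.inl (Or.inl rfl)
        | mulR ht s => cases ht
      · exact Or.inr (hG.tail ⟨l, hs⟩)
  · rintro ((rfl | ⟨F, hF, rfl⟩) | hG)
    · exact Relation.ReflTransGen.refl
    · induction hF with
      | single hs =>
        obtain ⟨l, hs⟩ := hs
        obtain ⟨a, rfl⟩ := noSmul_step_some hs (emb_noSmul f)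
        exact Relation.ReflTransGen.single ⟨some a, SStep.mulL (SStep.star hs)⟩
      | tail h hs ih =>
        obtain ⟨l, hs⟩ := hs
        exact ih.tail ⟨l, SStep.mulL (SStep.smulL hs)⟩
    · induction hG with
      | single hs =>
        obtain ⟨l, hs⟩ := hs
        obtain ⟨a, rfl⟩ := noSmul_step_some hs (emb_noSmul g)
        exact Relation.ReflTransGen.single ⟨some a, SStep.mulR (STerm.star _) hs⟩
      | tail h hs ih => exact ih.tail hs
end

section
/- The 1-transitions in the 1-chart interpretation of any star expression form no cycles; i.e., the 1-chart interpretation C₁(e) of every star expression e is weakly guarded. -/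
/-!
The only rule producing a 1-transition is `E↓ ⟹ E ⋆ f —1→ f`, which drops the left factor, and
the rules that propagate 1-transitions only rewrite the left factor of a `·` or `⋆`. Hence every
1-transition strictly decreases the size of a stacked star expression, and there is no cycle of
1-transitions.
-/

namespace RegEx

def SExp.size {A : Type} : SExp A → ℕ
  | .zero => 1
  | .one => 1
  | .act _ => 1
  | .add e f => e.size + f.size + 1
  | .mul e f => e.size + f.size + 1
  | .star e => e.size + 1
  | .smul e f => e.size + f.size + 1

theorem SExp.size_pos {A : Type} (E : SExp A) : 0 < E.size := by
  cases E <;> simp [SExp.size]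

theorem SStep.size_lt_of_none {A : Type} {X Y : SExp A} (h : SStep X none Y) :
    Y.size < X.size := by
  generalize hl : (none : Option A) = l at h
  induction h with
  | act | addL | addR | mulR | star => cases hl
  | mulL _ ih | smulL _ ih => have := ih hl; simp only [SExp.size]; omega
  | @smulT E f _ => have := E.size_pos; simp only [SExp.size]; omega

theorem SExp.size_lt_of_transGen_oneStep {A : Type} {X Y : SExp A}
    (h : Relation.TransGen (fun x y : SExp A => SStep x none y) X Y) : Y.size < X.size := by
  have := Relation.TransGen.lift SExp.size (p := (· > ·)) (fun _ _ => SStep.size_lt_of_none) _ _ h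
  rwa [Relation.transGen_eq_self] at this

end RegEx

open RegEx in
theorem stmt_16_general {A : Type} (X : SExp A) :
    ¬ Relation.TransGen (fun x y : SExp A => SStep x none y) X X :=
  fun hcyc => lt_irrefl _ (SExp.size_lt_of_transGen_oneStep hcyc)

open RegEx in
/-- the 1-chart interpretation of every star expression is weakly
guarded: its 1-transitions form no cycles. -/
theorem stmt_16 {A : Type} (e : StExp A) (X : SExp A)
    (hX : Relation.ReflTransGen sR (emb e) X) :
    ¬ Relation.TransGen (fun x y : SExp A => SStep x none y) X X :=
  stmt_16_general X
end
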